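/- Let D be a database, Σ a set of primary keys, and define the blocks of D as above. Then the set of operational repairs of D with respect to Σ (results s(D) of complete repairing sequences s where each operation removes a nonempty subset F of a currently conflicting pair {f, g}) equals the set of all subsets D' ⊆ D such that for every block B of D: if |B| = 1 then B ⊆ D', and if |B| ≥ 2 then |D' ∩ B| ≤ 1. In particular, every consistent subset of D that contains all singleton blocks is an operational repair. -/

import Mathlib

/-!
A repairing sequence from `D` to `T` exists exactly when `T ⊆ D` and every fact of `D \ T` is in
conflict with some other fact of `D`. Necessity holds because a removed fact conflicted with a
fact still present at that moment. For sufficiency, remove a conflicting fact `x ∉ T` on its own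
as long as this keeps the invariant; if it does not, some `z ∉ T` had `x` as its only remaining
conflict partner, and then removing the pair `{x, z}` keeps the invariant.
Under primary keys a fact is in conflict within `D` iff its block has at least two facts, and a
set is consistent iff it meets every block in at most one fact; the theorem follows.
-/

/-- One repairing step: remove a nonempty subset `F` of a currently conflicting pair
`{f, g}` (two distinct facts of the same block). -/
def RepairStep {α β : Type} [DecidableEq α] (block : α → β) (D' D'' : Finset α) : Prop :=
  ∃ (f g : α) (F : Finset α), f ∈ D' ∧ g ∈ D' ∧ f ≠ g ∧ block f = block g ∧
    F ⊆ ({f, g} : Finset α) ∧ F.Nonempty ∧ D'' = D' \ F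

section InConflict

variable {α β : Type} (block : α → β)

def InConflict (D : Finset α) (x : α) : Prop :=
  ∃ y ∈ D, y ≠ x ∧ block y = block x

variable {block}

theorem InConflict.mono {D D' : Finset α} {x : α} (h : D ⊆ D') (hx : InConflict block D x) :
    InConflict block D' x :=
  let ⟨y, hy, hyx, hb⟩ := hx
  ⟨y, h hy, hyx, hb⟩

theorem inConflict_iff_one_lt_card [DecidableEq β] {D : Finset α} {x : α} (hx : x ∈ D) :
    InConflict block D x ↔ 1 < (D.filter (block · = block x)).card := by
  constructor
  · rintro ⟨y, hy, hyx, hb⟩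
    exact Finset.one_lt_card.mpr
      ⟨y, Finset.mem_filter.mpr ⟨hy, hb⟩, x, Finset.mem_filter.mpr ⟨hx, rfl⟩, hyx⟩
  · intro h
    obtain ⟨y, hy, hyx⟩ := Finset.exists_mem_ne h x
    obtain ⟨hyD, hb⟩ := Finset.mem_filter.mp hy
    exact ⟨y, hyD, hyx, hb⟩

theorem forall_mem_sdiff_inConflict_iff [DecidableEq α] [DecidableEq β] {D T : Finset α} :
    (∀ x ∈ D \ T, InConflict block D x) ↔
      ∀ b, (D.filter (block · = b)).card = 1 → D.filter (block · = b) ⊆ T := by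
  constructor
  · intro h b hcard x hx
    obtain ⟨hxD, rfl⟩ := Finset.mem_filter.mp hx
    by_contra hxT
    have := (inConflict_iff_one_lt_card hxD).mp (h x (Finset.mem_sdiff.mpr ⟨hxD, hxT⟩))
    omega
  · intro h x hx
    obtain ⟨hxD, hxT⟩ := Finset.mem_sdiff.mp hx
    rw [inConflict_iff_one_lt_card hxD]
    by_contra hle
    have hpos : 0 < (D.filter (block · = block x)).card :=
      Finset.card_pos.mpr ⟨x, Finset.mem_filter.mpr ⟨hxD, rfl⟩⟩
    exact hxT (h (block x) (by omega) (Finset.mem_filter.mpr ⟨hxD, rfl⟩))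

theorem forall_eq_of_block_eq_iff_card_filter_le_one [DecidableEq β] {D : Finset α} :
    (∀ f ∈ D, ∀ g ∈ D, block f = block g → f = g) ↔
      ∀ b, (D.filter (block · = b)).card ≤ 1 := by
  simp only [Finset.card_le_one, Finset.mem_filter]
  constructor
  · rintro h b f ⟨hf, rfl⟩ g ⟨hg, hb⟩
    exact h f hf g hg hb.symm
  · intro h f hf g hg hb
    exact h (block f) f ⟨hf, rfl⟩ g ⟨hg, hb.symm⟩

end InConflict

namespace RepairStep

variable {α β : Type} {block : α → β} [DecidableEq α]

theorem subset {C C' : Finset α} (h : RepairStep block C C') : C' ⊆ C := by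
  obtain ⟨-, -, F, -, -, -, -, -, -, rfl⟩ := h
  exact Finset.sdiff_subset

theorem inConflict_of_mem_sdiff {C C' : Finset α} (h : RepairStep block C C') {x : α}
    (hx : x ∈ C \ C') : InConflict block C x := by
  obtain ⟨f, g, F, hf, hg, hfg, hb, hF, -, rfl⟩ := h
  have hxF : x ∈ F := (by simpa using hx : x ∈ C ∧ x ∈ F).2
  obtain rfl | rfl : x = f ∨ x = g := by simpa using hF hxF
  · exact ⟨g, hg, hfg.symm, hb.symm⟩
  · exact ⟨f, hf, hfg, hb⟩

theorem sdiff_singleton {C : Finset α} {x : α} (hx : x ∈ C) (hc : InConflict block C x) :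
    RepairStep block C (C \ {x}) := by
  obtain ⟨y, hy, hyx, hb⟩ := hc
  exact ⟨x, y, {x}, hx, hy, hyx.symm, hb.symm, by simp, by simp, rfl⟩

theorem sdiff_pair {C : Finset α} {x y : α} (hx : x ∈ C) (hy : y ∈ C) (hxy : x ≠ y)
    (hb : block x = block y) : RepairStep block C (C \ {x, y}) :=
  ⟨x, y, {x, y}, hx, hy, hxy, hb, subset_rfl, by simp, rfl⟩

theorem exists_step_of_forall_inConflict {T C : Finset α} (hTC : T ⊆ C)
    (hC : ∀ x ∈ C \ T, InConflict block C x) {x : α} (hx : x ∈ C \ T) :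
    ∃ C', RepairStep block C C' ∧ C' ⊂ C ∧ T ⊆ C' ∧ ∀ w ∈ C' \ T, InConflict block C' w := by
  obtain ⟨hxC, hxT⟩ := Finset.mem_sdiff.mp hx
  by_cases hkeep : ∀ w ∈ (C \ {x}) \ T, InConflict block (C \ {x}) w
  · refine ⟨C \ {x}, sdiff_singleton hxC (hC x hx),
      Finset.sdiff_ssubset (by simpa using hxC) (by simp), ?_, hkeep⟩
    intro t ht
    simpa [hTC ht] using fun h : t = x => hxT (h ▸ ht)
  push Not at hkeep
  obtain ⟨z, hz, hzalone⟩ := hkeep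
  obtain ⟨hzCx, hzT⟩ := Finset.mem_sdiff.mp hz
  have hzC : z ∈ C := (Finset.mem_sdiff.mp hzCx).1
  obtain ⟨v, hvC, hvz, hbv⟩ := hC z (Finset.mem_sdiff.mpr ⟨hzC, hzT⟩)
  have hvx : v = x := by
    by_contra hvx
    exact hzalone ⟨v, by simpa [hvx] using hvC, hvz, hbv⟩
  subst hvx
  refine ⟨C \ {v, z}, sdiff_pair hxC hzC hvz hbv,
    Finset.sdiff_ssubset (by simp [Finset.insert_subset_iff, hxC, hzC]) (by simp), ?_, ?_⟩
  · intro t ht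
    have : t ≠ v ∧ t ≠ z := ⟨fun h => hxT (h ▸ ht), fun h => hzT (h ▸ ht)⟩
    simpa [hTC ht] using this
  · intro w hw
    obtain ⟨hwC, hwT⟩ := Finset.mem_sdiff.mp hw
    obtain ⟨hwC, hwv, hwz⟩ : w ∈ C ∧ w ≠ v ∧ w ≠ z := by simpa using hwC
    obtain ⟨u, huC, huw, hbu⟩ := hC w (Finset.mem_sdiff.mpr ⟨hwC, hwT⟩)
    by_cases hu : u = v ∨ u = z
    · -- then `w` lies in the block of `z`, contradicting that `v` was `z`'s only partner
      have hbw : block w = block z := by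
        rcases hu with rfl | rfl
        · exact hbu.symm.trans hbv
        · exact hbu.symm
      exact absurd ⟨w, by simpa [hwv] using hwC, hwz, hbw⟩ hzalone
    · push Not at hu
      exact ⟨u, by simpa [hu.1, hu.2] using huC, huw, hbu⟩

theorem reflTransGen_of_forall_inConflict {T : Finset α} (C : Finset α) (hTC : T ⊆ C)
    (hC : ∀ x ∈ C \ T, InConflict block C x) : Relation.ReflTransGen (RepairStep block) C T := by
  induction C using Finset.strongInduction with
  | H C ih =>
    by_cases hCT : C ⊆ T
    · rw [subset_antisymm hCT hTC]
    obtain ⟨x, hxC, hxT⟩ := Finset.not_subset.mp hCT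
    obtain ⟨C', hstep, hlt, hTC', hC'⟩ :=
      exists_step_of_forall_inConflict hTC hC (Finset.mem_sdiff.mpr ⟨hxC, hxT⟩)
    exact .head hstep (ih C' hlt hTC' hC')

theorem reflTransGen_iff {D T : Finset α} :
    Relation.ReflTransGen (RepairStep block) D T ↔
      T ⊆ D ∧ ∀ x ∈ D \ T, InConflict block D x := by
  refine ⟨fun h => ?_, fun ⟨hTD, hD⟩ => reflTransGen_of_forall_inConflict D hTD hD⟩
  induction h with
  | refl => simp
  | @tail C C' _ hstep ih =>
    obtain ⟨hCD, hD⟩ := ih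
    refine ⟨hstep.subset.trans hCD, fun x hx => ?_⟩
    obtain ⟨hxD, hxC'⟩ := Finset.mem_sdiff.mp hx
    by_cases hxC : x ∈ C
    · exact (hstep.inConflict_of_mem_sdiff (Finset.mem_sdiff.mpr ⟨hxC, hxC'⟩)).mono hCD
    · exact hD x (Finset.mem_sdiff.mpr ⟨hxD, hxC⟩)

end RepairStep

/-- Operational repairs of `D` w.r.t. primary keys (given by the block function) are
exactly the subsets of `D` keeping every singleton block intact and at most one fact from
every block of size ≥ 2. -/
theorem stmt_14 {α β : Type} [DecidableEq α] [DecidableEq β]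
    (block : α → β) (D D'' : Finset α) :
    (Relation.ReflTransGen (RepairStep block) D D'' ∧
        ∀ f ∈ D'', ∀ g ∈ D'', block f = block g → f = g) ↔
    (D'' ⊆ D ∧ ∀ b : β,
      ((D.filter (fun x => block x = b)).card = 1 →
        D.filter (fun x => block x = b) ⊆ D'') ∧
      (2 ≤ (D.filter (fun x => block x = b)).card →
        (D''.filter (fun x => block x = b)).card ≤ 1)) := by
  rw [RepairStep.reflTransGen_iff, forall_mem_sdiff_inConflict_iff,
    forall_eq_of_block_eq_iff_card_filter_le_one, and_assoc, ← forall_and]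
  refine and_congr_right fun hsub => forall_congr' fun b => and_congr_right fun _ => ?_
  -- a block of `D` with fewer than two facts meets `D'' ⊆ D` in at most one fact anyway
  have hle := Finset.card_le_card (Finset.filter_subset_filter (block · = b) hsub)
  refine ⟨fun h _ => h, fun h => ?_⟩
  by_cases h2 : 2 ≤ (D.filter (block · = b)).card
  · exact h h2
  · omega
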